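/- For U in the symplectic Stiefel manifold SpSt(2n,2k), every matrix η = J_{2n} U T (U^T U) with T ∈ ℝ^{2k×2k} skew-symmetric lies in the normal space: g_U(Δ, η) = 0 for all tangent vectors Δ ∈ T_U SpSt(2n,2k), where g_U is the right-invariant metric. -/

import Mathlib

open Matrix

/-- The standard symplectic matrix `J_{2m} = [[0, I_m], [-I_m, 0]]`. -/
def symplJ (m : ℕ) : Matrix (Fin m ⊕ Fin m) (Fin m ⊕ Fin m) ℝ :=
  Matrix.fromBlocks 0 1 (-1) 0

/-- The symplectic inverse `X⁺ = J_{2k}ᵀ Xᵀ J_{2n}`. -/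
def symplInvRect {n k : ℕ} (X : Matrix (Fin n ⊕ Fin n) (Fin k ⊕ Fin k) ℝ) :
    Matrix (Fin k ⊕ Fin k) (Fin n ⊕ Fin n) ℝ :=
  (symplJ k)ᵀ * Xᵀ * symplJ n

/-- The right-invariant metric on `SpSt(2n,2k)`:
`g_U(X₁,X₂) = tr(X₁ᵀ (I − (1/2) Jᵀ U (UᵀU)⁻¹ Uᵀ J) X₂ (UᵀU)⁻¹)`. -/
noncomputable def metricGSt {n k : ℕ}
    (U X₁ X₂ : Matrix (Fin n ⊕ Fin n) (Fin k ⊕ Fin k) ℝ) : ℝ :=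
  Matrix.trace (X₁ᵀ *
    (1 - (1 / 2 : ℝ) • ((symplJ n)ᵀ * U * (Uᵀ * U)⁻¹ * Uᵀ * symplJ n)) *
    X₂ * (Uᵀ * U)⁻¹)

lemma symplJ_transpose (m : ℕ) : (symplJ m)ᵀ = -(symplJ m) := by
  ext i j
  cases i <;> cases j <;>
    simp [symplJ, Matrix.fromBlocks, Matrix.transpose_apply, Matrix.one_apply, eq_comm]

lemma symplJ_mul_self (m : ℕ) : symplJ m * symplJ m = -1 := by
  ext i j
  simp [symplJ, Matrix.fromBlocks_multiply]
  cases i <;> cases j <;> simp [Matrix.fromBlocks, Matrix.one_apply]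

theorem stiefel_normal_space_orthogonal {n k : ℕ}
    (U : Matrix (Fin n ⊕ Fin n) (Fin k ⊕ Fin k) ℝ)
    (hU : symplInvRect U * U = 1)
    (T : Matrix (Fin k ⊕ Fin k) (Fin k ⊕ Fin k) ℝ) (hT : Tᵀ = -T)
    (Δ : Matrix (Fin n ⊕ Fin n) (Fin k ⊕ Fin k) ℝ)
    (hΔ : symplInvRect Δ * U + symplInvRect U * Δ = 0) :
    metricGSt U Δ (symplJ n * U * T * (Uᵀ * U)) = 0 := by
  set J := symplJ n with hJ
  set Jk := symplJ k with hJkdef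
  have hJkJkT : Jk * Jkᵀ = 1 := by
    rw [symplJ_transpose, mul_neg, symplJ_mul_self, neg_neg]
  -- tangent condition without Jk: Δᵀ J U + Uᵀ J Δ = 0
  have htang : Δᵀ * J * U + Uᵀ * J * Δ = 0 := by
    have h := congrArg (fun M => Jk * M) hΔ
    simp only [symplInvRect, mul_add, mul_zero] at h
    calc Δᵀ * J * U + Uᵀ * J * Δ
        = Jk * Jkᵀ * Δᵀ * J * U + Jk * Jkᵀ * Uᵀ * J * Δ := by
          rw [hJkJkT, Matrix.one_mul, Matrix.one_mul]
      _ = Jk * (Jkᵀ * Δᵀ * J * U) + Jk * (Jkᵀ * Uᵀ * J * Δ) := by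
          simp only [Matrix.mul_assoc]
      _ = 0 := h
  -- A := Δᵀ J U is symmetric
  have hAsymm : (Δᵀ * J * U)ᵀ = Δᵀ * J * U := by
    have h1 : Δᵀ * J * U = -(Uᵀ * J * Δ) := eq_neg_of_add_eq_zero_left htang
    rw [Matrix.transpose_mul, Matrix.transpose_mul, Matrix.transpose_transpose,
      symplJ_transpose, h1]
    simp [Matrix.mul_assoc, Matrix.neg_mul, Matrix.mul_neg]
    rfl
  -- trace (Δᵀ J U T) = 0
  have htr : Matrix.trace (Δᵀ * (J * (U * T))) = 0 := by
    have h2 : Matrix.trace (Δᵀ * (J * (U * T)))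
        = Matrix.trace ((Δᵀ * J * U) * T) := by
      simp only [Matrix.mul_assoc]
    have h3 : Matrix.trace ((Δᵀ * J * U) * T)
        = - Matrix.trace ((Δᵀ * J * U) * T) := by
      conv_lhs => rw [← Matrix.trace_transpose, Matrix.transpose_mul, hT, hAsymm,
        Matrix.neg_mul, Matrix.trace_neg, Matrix.trace_mul_comm]
    rw [h2]
    linarith [h3]
  unfold metricGSt
  rw [← hJ]
  by_cases h : IsUnit (Uᵀ * U).det
  · have hSSi : (Uᵀ * U) * (Uᵀ * U)⁻¹ = 1 := Matrix.mul_nonsing_inv _ h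
    have hSiS : (Uᵀ * U)⁻¹ * (Uᵀ * U) = 1 := Matrix.nonsing_inv_mul _ h
    have key : Δᵀ * (1 - (1 / 2 : ℝ) • (Jᵀ * U * (Uᵀ * U)⁻¹ * Uᵀ * J)) *
        (J * U * T * (Uᵀ * U)) * (Uᵀ * U)⁻¹
        = (1 / 2 : ℝ) • (Δᵀ * (J * (U * T))) := by
      have hη : J * (U * (T * ((Uᵀ * U) * (Uᵀ * U)⁻¹))) = J * (U * T) := by
        rw [hSSi, mul_one]
      have hP : Jᵀ * (U * ((Uᵀ * U)⁻¹ * (Uᵀ * (J * (J * (U * T)))))) = J * (U * T) := by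
        have e1 : J * (J * (U * T)) = -(U * T) := by
          rw [← Matrix.mul_assoc, symplJ_mul_self]; simp
        rw [e1]
        have e2 : Uᵀ * -(U * T) = -((Uᵀ * U) * T) := by simp [Matrix.mul_assoc]
        rw [e2]
        have e3 : (Uᵀ * U)⁻¹ * -((Uᵀ * U) * T) = -T := by
          rw [Matrix.mul_neg, ← Matrix.mul_assoc, hSiS, Matrix.one_mul]
        rw [e3, symplJ_transpose]
        simp [hJ]
      calc Δᵀ * (1 - (1 / 2 : ℝ) • (Jᵀ * U * (Uᵀ * U)⁻¹ * Uᵀ * J)) *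
            (J * U * T * (Uᵀ * U)) * (Uᵀ * U)⁻¹
          = Δᵀ * (J * (U * (T * ((Uᵀ * U) * (Uᵀ * U)⁻¹)))) -
            (1 / 2 : ℝ) • (Δᵀ * (Jᵀ * (U * ((Uᵀ * U)⁻¹ * (Uᵀ * (J * (J * (U * (T * ((Uᵀ * U) * (Uᵀ * U)⁻¹)))))))))) := by
            simp only [Matrix.mul_sub, Matrix.sub_mul, Matrix.mul_one, Matrix.one_mul,
              Matrix.mul_smul, Matrix.smul_mul, Matrix.mul_assoc]
        _ = Δᵀ * (J * (U * T)) - (1 / 2 : ℝ) • (Δᵀ * (J * (U * T))) := by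
            rw [hη, hP]
        _ = (1 / 2 : ℝ) • (Δᵀ * (J * (U * T))) := by
            module
    rw [key, Matrix.trace_smul, htr, smul_zero]
  · rw [Matrix.nonsing_inv_apply_not_isUnit _ h, Matrix.mul_zero, Matrix.trace_zero]
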